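/- Let cos α := cos θ_a cos θ cos(ψ_a − ψ) + sin θ_a sin θ, where θ = θ_a − e_θ and ψ = ψ_a − e_ψ. Then |1 − cos²α| ≤ 7 e_θ² + 5 e_ψ², and hence √(1 − cos²α) ≤ √7 · ‖(e_θ, e_ψ)‖. -/
import Mathlib


open Real

theorem cos_alpha_bound (θa ψa eθ eψ θ ψ c : ℝ)
    (hθ : θ = θa - eθ) (hψ : ψ = ψa - eψ)
    (hc : c = cos θa * cos θ * cos (ψa - ψ) + sin θa * sin θ) :
    |1 - c ^ 2| ≤ 7 * eθ ^ 2 + 5 * eψ ^ 2 ∧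
    Real.sqrt (1 - c ^ 2) ≤ Real.sqrt 7 * Real.sqrt (eθ ^ 2 + eψ ^ 2) := by
  have hψe : ψa - ψ = eψ := by rw [hψ]; ring
  rw [hψe] at hc
  -- |c| ≤ 1
  have hp1 : cos θa ^ 2 + sin θa ^ 2 = 1 := by rw [add_comm]; exact sin_sq_add_cos_sq θa
  have hp2 : cos θ ^ 2 + sin θ ^ 2 = 1 := by rw [add_comm]; exact sin_sq_add_cos_sq θ
  have hce : cos eψ ^ 2 ≤ 1 := by
    have := neg_one_le_cos eψ; have := cos_le_one eψ; nlinarith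
  have hc2 : c ^ 2 ≤ 1 := by
    have hid : c ^ 2 + (cos θa * sin θ - sin θa * (cos θ * cos eψ)) ^ 2
        = (cos θa ^ 2 + sin θa ^ 2) * (cos θ ^ 2 * cos eψ ^ 2 + sin θ ^ 2) := by
      rw [hc]; ring
    rw [hp1, one_mul] at hid
    have hcs : c ^ 2 ≤ cos θ ^ 2 * cos eψ ^ 2 + sin θ ^ 2 := by
      nlinarith [sq_nonneg (cos θa * sin θ - sin θa * (cos θ * cos eψ))]
    have h2 : cos θ ^ 2 * cos eψ ^ 2 ≤ cos θ ^ 2 :=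
      mul_le_of_le_one_right (sq_nonneg (cos θ)) hce
    linarith
  -- 1 - c ≤ eθ²/2 + eψ²/2
  have hcoseθ : cos θa * cos θ + sin θa * sin θ = cos eθ := by
    rw [← Real.cos_sub]; congr 1; rw [hθ]; ring
  have h1 : 1 - c ≤ eθ ^ 2 / 2 + eψ ^ 2 / 2 := by
    have h2 : 1 - eθ ^ 2 / 2 ≤ cos eθ := Real.one_sub_sq_div_two_le_cos
    have h3 : 1 - eψ ^ 2 / 2 ≤ cos eψ := Real.one_sub_sq_div_two_le_cos
    have h4 : cos eψ ≤ 1 := cos_le_one eψ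
    have habs : cos θa * cos θ ≤ 1 ∧ -1 ≤ cos θa * cos θ := by
      constructor <;> nlinarith [sq_nonneg (cos θa - cos θ), sq_nonneg (cos θa + cos θ),
        sq_nonneg (sin θa), sq_nonneg (sin θ)]
    have : c = cos eθ - cos θa * cos θ * (1 - cos eψ) := by rw [hc, ← hcoseθ]; ring
    nlinarith [habs.1, habs.2, mul_nonneg (sq_nonneg (cos θa * cos θ)) (sq_nonneg eψ)]
  have hkey : 1 - c ^ 2 ≤ eθ ^ 2 + eψ ^ 2 := by nlinarith
  have hnn : 0 ≤ 1 - c ^ 2 := by linarith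
  constructor
  · rw [abs_of_nonneg hnn]; nlinarith [sq_nonneg eθ, sq_nonneg eψ]
  · calc Real.sqrt (1 - c ^ 2) ≤ Real.sqrt (7 * (eθ ^ 2 + eψ ^ 2)) := by
          apply Real.sqrt_le_sqrt; nlinarith [sq_nonneg eθ, sq_nonneg eψ]
      _ = Real.sqrt 7 * Real.sqrt (eθ ^ 2 + eψ ^ 2) := Real.sqrt_mul (by norm_num) _
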